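/- Let θ : [0,∞) → ℝ^d be differentiable with dθ_i/dt = θ_i (r_i − (Mθ)_i) for all t ≥ 0 and all i, and suppose θ(t) ≥ 0 coordinatewise for all t ≥ 0. Then for all t ≥ 0, d/dt f(θ(t)) = − Σ_{i=1}^d θ_i(t) (r_i − (M θ(t))_i)² ≤ 0; in particular, t ↦ f(θ(t)) is nonincreasing on [0,∞). -/

import Mathlib

open Matrix

/-! The loss is `f(θ) = c - ⟨r, θ⟩ + ½⟨θ, Mθ⟩` with `M` symmetric, so its gradient is `Mθ - r` and
along any curve `d/dt f(θ(t)) = ⟨Mθ - r, θ'⟩`. For the DLN flow `θ'ᵢ = θᵢ (rᵢ - (Mθ)ᵢ)` this is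
`-Σᵢ θᵢ (rᵢ - (Mθ)ᵢ)²`, which is nonpositive as long as `θ ≥ 0`; the mean value theorem does
the rest. -/

section Calculus

variable {𝕜 ι κ : Type*} [NontriviallyNormedField 𝕜] [Fintype ι]

theorem HasDerivAt.dotProduct {u v : 𝕜 → ι → 𝕜} {u' v' : ι → 𝕜} {t : 𝕜}
    (hu : HasDerivAt u u' t) (hv : HasDerivAt v v' t) :
    HasDerivAt (fun τ => u τ ⬝ᵥ v τ) (u' ⬝ᵥ v t + u t ⬝ᵥ v') t := by
  rw [hasDerivAt_pi] at hu hv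
  simpa only [_root_.dotProduct, Pi.mul_apply, ← Finset.sum_add_distrib] using
    HasDerivAt.fun_sum fun i _ => (hu i).mul (hv i)

theorem HasDerivAt.mulVec {u : 𝕜 → ι → 𝕜} {u' : ι → 𝕜} {t : 𝕜} (M : Matrix κ ι 𝕜)
    (hu : HasDerivAt u u' t) : HasDerivAt (fun τ => M *ᵥ u τ) (M *ᵥ u') t :=
  hasDerivAt_pi.2 fun i => by
    simpa only [zero_dotProduct, zero_add, Matrix.mulVec] using
      (hasDerivAt_const t (M i)).dotProduct hu

theorem Matrix.IsSymm.dotProduct_mulVec_comm {R : Type*} [CommSemiring R] {M : Matrix ι ι R}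
    (hM : M.IsSymm) (v w : ι → R) : v ⬝ᵥ M *ᵥ w = w ⬝ᵥ M *ᵥ v := by
  rw [dotProduct_mulVec, dotProduct_comm, ← mulVec_transpose, hM.eq]

theorem HasDerivAt.quadratic {u : ℝ → ι → ℝ} {u' : ι → ℝ} {t : ℝ} {M : Matrix ι ι ℝ}
    (hM : M.IsSymm) (c : ℝ) (r : ι → ℝ) (hu : HasDerivAt u u' t) :
    HasDerivAt (fun τ => c - r ⬝ᵥ u τ + 1 / 2 * (u τ ⬝ᵥ M *ᵥ u τ)) ((M *ᵥ u t - r) ⬝ᵥ u') t := by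
  have hlin : HasDerivAt (fun τ => r ⬝ᵥ u τ) (r ⬝ᵥ u') t := by
    simpa only [zero_dotProduct, zero_add] using (hasDerivAt_const t r).dotProduct hu
  have hq := (hu.dotProduct (hu.mulVec M)).const_mul (1 / 2 : ℝ)
  refine (((hasDerivAt_const t c).sub hlin).add hq).congr_deriv ?_
  rw [hM.dotProduct_mulVec_comm (u t) u', sub_dotProduct, dotProduct_comm u']
  ring

end Calculus

theorem dln_loss_nonincreasing_general (n d : ℕ)
    (X : Matrix (Fin n) (Fin d) ℝ) (y : Fin n → ℝ)
    (M : Matrix (Fin d) (Fin d) ℝ) (r : Fin d → ℝ)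
    (hM : M = Xᵀ * X)
    (f : (Fin d → ℝ) → ℝ)
    (hf : ∀ θ : Fin d → ℝ, f θ =
      (1 / 2) * ∑ j, (y j) ^ 2 - ∑ i, r i * θ i + (1 / 2) * ∑ i, θ i * (M *ᵥ θ) i)
    (θ : ℝ → Fin d → ℝ)
    (hode : ∀ t ≥ (0 : ℝ), ∀ i,
      HasDerivAt (fun τ => θ τ i) (θ t i * (r i - (M *ᵥ θ t) i)) t)
    (hpos : ∀ t ≥ (0 : ℝ), ∀ i, 0 ≤ θ t i) :
    (∀ t ≥ (0 : ℝ),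
      HasDerivAt (fun τ => f (θ τ)) (-(∑ i, θ t i * (r i - (M *ᵥ θ t) i) ^ 2)) t ∧
      -(∑ i, θ t i * (r i - (M *ᵥ θ t) i) ^ 2) ≤ 0) ∧
    AntitoneOn (fun t => f (θ t)) (Set.Ici 0) := by
  have hsymm : M.IsSymm := by
    rw [hM, IsSymm, transpose_mul, transpose_transpose]
  have hloss : f = fun θ => (1 / 2) * ∑ j, (y j) ^ 2 - r ⬝ᵥ θ + 1 / 2 * (θ ⬝ᵥ M *ᵥ θ) :=
    funext hf
  have hderiv : ∀ t ≥ (0 : ℝ),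
      HasDerivAt (fun τ => f (θ τ)) (-(∑ i, θ t i * (r i - (M *ᵥ θ t) i) ^ 2)) t := by
    intro t ht
    have hflow : HasDerivAt θ (θ t * (r - M *ᵥ θ t)) t := hasDerivAt_pi.2 (hode t ht)
    rw [hloss]
    refine (hflow.quadratic hsymm _ r).congr_deriv ?_
    simp only [dotProduct, ← Finset.sum_neg_distrib, Pi.sub_apply, Pi.mul_apply]
    exact Finset.sum_congr rfl fun i _ => by ring
  have hnonpos : ∀ t ≥ (0 : ℝ), -(∑ i, θ t i * (r i - (M *ᵥ θ t) i) ^ 2) ≤ 0 := fun t ht =>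
    neg_nonpos.2 <| Finset.sum_nonneg fun i _ => mul_nonneg (hpos t ht i) (sq_nonneg _)
  refine ⟨fun t ht => ⟨hderiv t ht, hnonpos t ht⟩, ?_⟩
  exact antitoneOn_of_hasDerivWithinAt_nonpos (convex_Ici 0)
    (fun t ht => (hderiv t ht).continuousAt.continuousWithinAt)
    (fun t ht => (hderiv t (interior_subset ht)).hasDerivWithinAt)
    (fun t ht => hnonpos t (interior_subset ht))

/-- Along any nonnegative solution of the DLN ODE, the quadratic loss
`f(θ) = ½‖y‖² − ⟨r, θ⟩ + ½⟨θ, Mθ⟩` has derivative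
`−Σᵢ θᵢ (rᵢ − (Mθ)ᵢ)² ≤ 0`; in particular `t ↦ f(θ(t))` is nonincreasing on `[0,∞)`. -/
theorem dln_loss_nonincreasing (n d : ℕ) (hn : 0 < n) (hd : 0 < d)
    (X : Matrix (Fin n) (Fin d) ℝ) (y : Fin n → ℝ)
    (M : Matrix (Fin d) (Fin d) ℝ) (r : Fin d → ℝ)
    (hM : M = Xᵀ * X) (hr : r = Xᵀ *ᵥ y)
    (f : (Fin d → ℝ) → ℝ)
    (hf : ∀ θ : Fin d → ℝ, f θ =
      (1 / 2) * ∑ j, (y j) ^ 2 - ∑ i, r i * θ i + (1 / 2) * ∑ i, θ i * (M *ᵥ θ) i)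
    (θ : ℝ → Fin d → ℝ)
    (hode : ∀ t ≥ (0 : ℝ), ∀ i,
      HasDerivAt (fun τ => θ τ i) (θ t i * (r i - (M *ᵥ θ t) i)) t)
    (hpos : ∀ t ≥ (0 : ℝ), ∀ i, 0 ≤ θ t i) :
    (∀ t ≥ (0 : ℝ),
      HasDerivAt (fun τ => f (θ τ)) (-(∑ i, θ t i * (r i - (M *ᵥ θ t) i) ^ 2)) t ∧
      -(∑ i, θ t i * (r i - (M *ᵥ θ t) i) ^ 2) ≤ 0) ∧
    AntitoneOn (fun t => f (θ t)) (Set.Ici 0) :=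
  dln_loss_nonincreasing_general n d X y M r hM f hf θ hode hpos
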